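/- arXiv:1308.0806 — 5 statements merged into one kernel-verified Lean document; each statement's English description precedes it below -/
import Mathlib

section
/- Let (pᵢ, λᵢ)_{i=1}^n be pairs with pᵢ ≥ 0, ∑ pᵢ = 1, and λᵢ ∈ (0,1]. Then ∑ᵢ pᵢ (-log₂ λᵢ) ≥ -log₂(∑ᵢ pᵢ λᵢ). Consequently, for any state ρ, G_l^c(ρ) ≥ -log₂(1 - G^c(ρ)), where G^c and G_l^c are the convex-roof extensions of the linear and logarithmic geometric measures. -/
/-- Jensen's inequality for `-log₂`: for weights `pᵢ ≥ 0` summing to `1` and values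
`λᵢ ∈ (0,1]`, we have `∑ pᵢ (-log₂ λᵢ) ≥ -log₂(∑ pᵢ λᵢ)`.  Consequently, for any state
whose convex-roof logarithmic GM `G_l^c` is attained by a decomposition with these values,
and whose convex-roof linear GM satisfies `G^c ≤ ∑ pᵢ (1 - λᵢ)`, one has
`G_l^c ≥ -log₂(1 - G^c)`. -/
theorem jensen_neg_log_and_convex_roof_bound (n : ℕ) (p lam : Fin n → ℝ)
    (hp : ∀ i, 0 ≤ p i) (hps : ∑ i, p i = 1)
    (hl : ∀ i, 0 < lam i ∧ lam i ≤ 1) :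
    (∑ i, p i * (-Real.logb 2 (lam i)) ≥ -Real.logb 2 (∑ i, p i * lam i)) ∧
    (∀ Gc Gcl : ℝ,
      Gcl = ∑ i, p i * (-Real.logb 2 (lam i)) →
      Gc ≤ ∑ i, p i * (1 - lam i) →
      Gcl ≥ -Real.logb 2 (1 - Gc)) := by
  have hlog2 : (0:ℝ) < Real.log 2 := Real.log_pos one_lt_two
  -- Jensen for log
  have jensen : ∑ i, p i * Real.log (lam i) ≤ Real.log (∑ i, p i * lam i) := by
    have := (strictConcaveOn_log_Ioi.concaveOn).le_map_sum
      (t := Finset.univ) (w := p) (p := lam)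
      (fun i _ => hp i) hps (fun i _ => (hl i).1)
    simpa [smul_eq_mul] using this
  have key : ∑ i, p i * (-Real.logb 2 (lam i)) ≥ -Real.logb 2 (∑ i, p i * lam i) := by
    have h1 : ∑ i, p i * (-Real.logb 2 (lam i))
        = -(∑ i, p i * Real.log (lam i)) / Real.log 2 := by
      rw [← Finset.sum_neg_distrib, Finset.sum_div]
      refine Finset.sum_congr rfl fun i _ => ?_
      rw [Real.logb]
      ring
    rw [h1, Real.logb, ge_iff_le, neg_div, neg_le_neg_iff,
      div_le_div_iff_of_pos_right hlog2]
    exact jensen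
  refine ⟨key, fun Gc Gcl hGcl hGc => ?_⟩
  -- positivity of ∑ p i * lam i
  have hpos : 0 < ∑ i, p i * lam i := by
    obtain ⟨i, -, hpi⟩ : ∃ i ∈ Finset.univ, 0 < p i := by
      by_contra h
      push_neg at h
      have : ∑ i, p i ≤ 0 := Finset.sum_nonpos fun i _ => h i (Finset.mem_univ i)
      linarith [hps]
    have : p i * lam i ≤ ∑ j, p j * lam j :=
      Finset.single_le_sum (fun j _ => mul_nonneg (hp j) (hl j).1.le) (Finset.mem_univ i)
    nlinarith [(hl i).1]
  have hsum : ∑ i, p i * (1 - lam i) = 1 - ∑ i, p i * lam i := by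
    have h2 : ∑ i, p i * (1 - lam i) = ∑ i, (p i - p i * lam i) :=
      Finset.sum_congr rfl fun i _ => by ring
    rw [h2, Finset.sum_sub_distrib, hps]
  have h1Gc : ∑ i, p i * lam i ≤ 1 - Gc := by rw [hsum] at hGc; linarith
  have hmono : Real.logb 2 (∑ i, p i * lam i) ≤ Real.logb 2 (1 - Gc) :=
    Real.logb_le_logb_of_le one_lt_two hpos h1Gc
  rw [hGcl]
  calc -Real.logb 2 (1 - Gc) ≤ -Real.logb 2 (∑ i, p i * lam i) := by linarith
    _ ≤ ∑ i, p i * (-Real.logb 2 (lam i)) := key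
end

section
/- Let ρ be a density matrix, |φ⟩ a unit vector, and set g = ⟨φ|ρ|φ⟩. Then there exists a decomposition ρ = ∑_{i=1}^r pᵢ |ψᵢ⟩⟨ψᵢ| with r = rank ρ, pᵢ > 0, ∑ pᵢ = 1, unit vectors ψᵢ, such that |⟨φ|ψᵢ⟩|² = g for every i. -/
open Matrix
open scoped ComplexOrder

noncomputable section EqOverlapAux

namespace EqOverlapAux

variable {d : ℕ}

/-- squared norm of a vector -/
def nsq (v : Fin d → ℂ) : ℝ := ∑ j, ‖v j‖^2

/-- outer product -/
def outer (v : Fin d → ℂ) : Matrix (Fin d) (Fin d) ℂ := Matrix.vecMulVec v (star v)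

lemma nsq_nonneg (v : Fin d → ℂ) : 0 ≤ nsq v :=
  Finset.sum_nonneg fun _ _ => sq_nonneg _

lemma nsq_pos {v : Fin d → ℂ} (hv : v ≠ 0) : 0 < nsq v := by
  rcases (nsq_nonneg v).lt_or_eq with h | h
  · exact h
  · exfalso; apply hv
    funext j
    have h0 : ∀ i ∈ Finset.univ, ‖v i‖^2 = 0 := by
      intro i _
      have := (Finset.sum_eq_zero_iff_of_nonneg (fun i _ => sq_nonneg ‖v i‖)).mp h.symm
      exact this i (Finset.mem_univ i)
    have := h0 j (Finset.mem_univ j)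
    simpa using pow_eq_zero_iff (n := 2) (by norm_num) |>.mp this

lemma nsq_smul (c : ℂ) (v : Fin d → ℂ) : nsq (c • v) = ‖c‖^2 * nsq v := by
  unfold nsq
  rw [Finset.mul_sum]
  refine Finset.sum_congr rfl fun j _ => ?_
  simp [norm_smul, mul_pow]

lemma dot_smul_right (φ : Fin d → ℂ) (c : ℂ) (v : Fin d → ℂ) :
    star φ ⬝ᵥ (c • v) = c * (star φ ⬝ᵥ v) := by
  simp [dotProduct, Finset.mul_sum]; ring_nf
  exact Finset.sum_congr rfl fun j _ => by ring

lemma outer_apply (v : Fin d → ℂ) (i j : Fin d) :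
    outer v i j = v i * star (v j) := by
  simp [outer, Matrix.vecMulVec_apply]

lemma outer_smul (c : ℂ) (v : Fin d → ℂ) : outer (c • v) = (c * star c) • outer v := by
  ext i j
  simp [outer_apply]
  ring

/-- quadratic form of an outer product -/
lemma quad_outer (φ v : Fin d → ℂ) :
    star φ ⬝ᵥ (outer v).mulVec φ = (‖star φ ⬝ᵥ v‖^2 : ℝ) := by
  have h1 : (outer v).mulVec φ = (star v ⬝ᵥ φ) • v := by
    funext i
    simp [Matrix.mulVec, outer_apply, dotProduct, Finset.sum_mul]
    exact Finset.sum_congr rfl fun j _ => by ring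
  rw [h1, dot_smul_right]
  have h2 : star v ⬝ᵥ φ = star (star φ ⬝ᵥ v) := by
    simp [dotProduct, star_sum]
    exact Finset.sum_congr rfl fun j _ => by ring
  rw [h2, mul_comm]
  rw [show star (star φ ⬝ᵥ v) = (starRingEnd ℂ) (star φ ⬝ᵥ v) from rfl]
  rw [Complex.mul_conj]
  rw [Complex.normSq_eq_norm_sq]

/-- trace of an outer product -/
lemma trace_outer (v : Fin d → ℂ) : (outer v).trace = (nsq v : ℝ) := by
  unfold Matrix.trace nsq
  push_cast
  refine Finset.sum_congr rfl fun j _ => ?_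
  simp [Matrix.diag, outer_apply]
  rw [Complex.mul_conj, Complex.normSq_eq_norm_sq]
  norm_cast

/-- rotation preserves sum of outer products -/
lemma outer_rot (u v : Fin d → ℂ) (a b : ℝ) (hab : a^2 + b^2 = 1) :
    outer ((a:ℂ) • u + (b:ℂ) • v) + outer ((-b:ℂ) • u + (a:ℂ) • v) = outer u + outer v := by
  have habC : (a:ℂ)^2 + (b:ℂ)^2 = 1 := by exact_mod_cast congrArg (Complex.ofReal) hab
  ext i j
  simp only [Matrix.add_apply, outer_apply, Pi.add_apply, Pi.smul_apply, smul_eq_mul,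
    star_add, star_mul', Complex.star_def, Complex.conj_ofReal, map_neg]
  linear_combination (u i * (starRingEnd ℂ) (u j) + v i * (starRingEnd ℂ) (v j)) * habC

lemma dot_add (φ u v : Fin d → ℂ) : star φ ⬝ᵥ (u + v) = star φ ⬝ᵥ u + star φ ⬝ᵥ v :=
  dotProduct_add _ _ _

/-- IVT pair lemma -/
lemma pair_equalize (φ u v : Fin d → ℂ) (g : ℝ)
    (hindep : ∀ a b : ℂ, a • u + b • v = 0 → a = 0 ∧ b = 0)
    (h1 : ‖star φ ⬝ᵥ u‖^2 < g * nsq u) (h2 : g * nsq v < ‖star φ ⬝ᵥ v‖^2) :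
    ∃ w w' : Fin d → ℂ, w ≠ 0 ∧ w' ≠ 0 ∧
      outer w + outer w' = outer u + outer v ∧
      ‖star φ ⬝ᵥ w‖^2 = g * nsq w := by
  set W : ℝ → (Fin d → ℂ) := fun t => ((Real.cos t : ℂ)) • u + ((Real.sin t : ℂ)) • v with hW
  set f : ℝ → ℝ := fun t => ‖star φ ⬝ᵥ W t‖^2 - g * nsq (W t) with hf
  have hcont : Continuous f := by
    have h1c : Continuous fun t : ℝ => star φ ⬝ᵥ W t := by
      have : (fun t : ℝ => star φ ⬝ᵥ W t)
          = fun t : ℝ => (Real.cos t : ℂ) * (star φ ⬝ᵥ u) + (Real.sin t : ℂ) * (star φ ⬝ᵥ v) := by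
        funext t
        rw [hW]; simp only []
        rw [dot_add, dot_smul_right, dot_smul_right]
      rw [this]
      fun_prop
    have h2c : Continuous fun t : ℝ => nsq (W t) := by
      unfold nsq
      apply continuous_finset_sum
      intro j _
      have : (fun t : ℝ => ‖W t j‖^2)
          = fun t : ℝ => ‖(Real.cos t : ℂ) * u j + (Real.sin t : ℂ) * v j‖^2 := by
        funext t; rw [hW]; simp
      rw [this]
      fun_prop
    rw [hf]
    fun_prop
  have hf0 : f 0 < 0 := by
    have : W 0 = u := by rw [hW]; simp
    rw [hf]; simp only [this]; linarith
  have hfpi : 0 < f (Real.pi/2) := by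
    have : W (Real.pi/2) = v := by rw [hW]; simp
    rw [hf]; simp only [this]; linarith
  have hmem : (0:ℝ) ∈ Set.Icc (f 0) (f (Real.pi/2)) := ⟨hf0.le, hfpi.le⟩
  have := intermediate_value_Icc (by positivity : (0:ℝ) ≤ Real.pi/2) hcont.continuousOn hmem
  obtain ⟨t, ht, hft⟩ := this
  set a := Real.cos t with ha
  set b := Real.sin t with hb
  have hab : a^2 + b^2 = 1 := by rw [ha, hb]; exact Real.cos_sq_add_sin_sq t
  refine ⟨W t, ((-b:ℂ)) • u + ((a:ℂ)) • v, ?_, ?_, ?_, ?_⟩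
  · intro h
    have := hindep _ _ h
    have ha0 : (a:ℂ) = 0 := this.1
    have hb0 : (b:ℂ) = 0 := this.2
    have : a = 0 := by exact_mod_cast ha0
    have hb' : b = 0 := by exact_mod_cast hb0
    rw [this, hb'] at hab; norm_num at hab
  · intro h
    have := hindep _ _ h
    have ha0 : ((-b:ℝ):ℂ) = 0 := by exact_mod_cast this.1
    have hb0 : (a:ℂ) = 0 := this.2
    have hbz : b = 0 := by
      have h' : (-b:ℝ) = 0 := by exact_mod_cast ha0
      linarith
    have haz : a = 0 := by exact_mod_cast hb0
    rw [haz, hbz] at hab; norm_num at hab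
  · exact outer_rot u v a b hab
  · have : f t = 0 := hft
    rw [hf] at this
    simp only [] at this
    linarith

/-- quadratic form of a sum of outer products -/
lemma quad_of_sum_outer (φ : Fin d → ℂ) {n : ℕ} (u : Fin n → (Fin d → ℂ))
    {M : Matrix (Fin d) (Fin d) ℂ} (h : M = ∑ i, outer (u i)) :
    star φ ⬝ᵥ M.mulVec φ = ((∑ i, ‖star φ ⬝ᵥ u i‖^2 : ℝ) : ℂ) := by
  subst h
  have key : star φ ⬝ᵥ (∑ i, outer (u i)).mulVec φ
      = ∑ i, star φ ⬝ᵥ (outer (u i)).mulVec φ := by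
    let L : Matrix (Fin d) (Fin d) ℂ →+ ℂ :=
      { toFun := fun M => star φ ⬝ᵥ M.mulVec φ
        map_zero' := by simp [Matrix.mulVec, dotProduct]
        map_add' := fun A B =>
          show star φ ⬝ᵥ (A + B) *ᵥ φ = star φ ⬝ᵥ A *ᵥ φ + star φ ⬝ᵥ B *ᵥ φ by
            rw [Matrix.add_mulVec, dotProduct_add] }
    exact map_sum L _ _
  rw [key]
  simp only [quad_outer]
  norm_cast

/-- trace of a sum of outer products -/
lemma trace_of_sum_outer {n : ℕ} (u : Fin n → (Fin d → ℂ))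
    {M : Matrix (Fin d) (Fin d) ℂ} (h : M = ∑ i, outer (u i)) :
    M.trace = ((∑ i, nsq (u i) : ℝ) : ℂ) := by
  subst h
  rw [Matrix.trace_sum]
  push_cast
  exact Finset.sum_congr rfl fun i _ => trace_outer (u i)

lemma sums_eq_of_outer_sum_eq (φ : Fin d → ℂ) {n m : ℕ}
    (w : Fin n → (Fin d → ℂ)) (u : Fin m → (Fin d → ℂ))
    (h : ∑ i, outer (w i) = ∑ i, outer (u i)) :
    (∑ i, ‖star φ ⬝ᵥ w i‖^2 = ∑ i, ‖star φ ⬝ᵥ u i‖^2) ∧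
    (∑ i, nsq (w i) = ∑ i, nsq (u i)) := by
  constructor
  · have h1 := quad_of_sum_outer φ w rfl
    have h2 := quad_of_sum_outer φ u rfl
    rw [h] at h1
    rw [h1] at h2
    exact_mod_cast h2
  · have h1 := trace_of_sum_outer w rfl
    have h2 := trace_of_sum_outer u rfl
    rw [h] at h1
    rw [h1] at h2
    exact_mod_cast h2

lemma sum_comp_update_pair {M : Type*} [AddCommMonoid M] {n : ℕ}
    (G : (Fin d → ℂ) → M) (u : Fin n → (Fin d → ℂ)) {i j : Fin n} (hij : i ≠ j)
    (w w' : Fin d → ℂ) :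
    ∑ k, G (Function.update (Function.update u i w) j w' k)
      = G w + G w' + ∑ k ∈ ((Finset.univ \ {j}) \ {i}), G (u k) := by
  have e1 : (fun k => G (Function.update (Function.update u i w) j w' k))
      = Function.update (Function.update (fun k => G (u k)) i (G w)) j (G w') := by
    funext k
    by_cases hk : k = j
    · subst hk; simp [Function.update_self]
    · rw [Function.update_of_ne hk, Function.update_of_ne hk]
      by_cases hk' : k = i
      · subst hk'; simp [Function.update_self]
      · rw [Function.update_of_ne hk', Function.update_of_ne hk']
  rw [e1]
  rw [Finset.sum_update_of_mem (Finset.mem_univ j)]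
  rw [Finset.sum_update_of_mem
    (Finset.mem_sdiff.mpr ⟨Finset.mem_univ i, by simp [hij]⟩)]
  abel

lemma sum_eq_pair_add {M : Type*} [AddCommMonoid M] {n : ℕ}
    (G : (Fin n → M)) {i j : Fin n} (hij : i ≠ j) :
    ∑ k, G k = G i + G j + ∑ k ∈ ((Finset.univ \ {j}) \ {i}), G k := by
  rw [Finset.sum_eq_add_sum_sdiff_singleton_of_mem (Finset.mem_univ j)]
  rw [Finset.sum_eq_add_sum_sdiff_singleton_of_mem
    (Finset.mem_sdiff.mpr ⟨Finset.mem_univ i, by simp [hij]⟩)]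
  abel

/-- one step: produce an equivalent family whose first member has exact overlap -/
lemma step (φ : Fin d → ℂ) (g : ℝ) {n : ℕ} (u : Fin (n+1) → (Fin d → ℂ))
    (hu : ∀ i, u i ≠ 0)
    (hsum : ∑ i, ‖star φ ⬝ᵥ u i‖^2 = g * ∑ i, nsq (u i)) :
    ∃ v : Fin (n+1) → (Fin d → ℂ), (∀ i, v i ≠ 0) ∧
      (∑ i, outer (v i) = ∑ i, outer (u i)) ∧
      ‖star φ ⬝ᵥ v 0‖^2 = g * nsq (v 0) := by
  by_cases hex : ∃ i, ‖star φ ⬝ᵥ u i‖^2 = g * nsq (u i)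
  · obtain ⟨i, hi⟩ := hex
    refine ⟨u ∘ (Equiv.swap 0 i), fun k => hu _, ?_, ?_⟩
    · exact Fintype.sum_equiv (Equiv.swap 0 i) _ _ (fun k => rfl)
    · simp [Equiv.swap_apply_left]
      exact hi
  · push_neg at hex
    set F : Fin (n+1) → ℝ := fun i => ‖star φ ⬝ᵥ u i‖^2 - g * nsq (u i) with hF
    have hFsum : ∑ i, F i = 0 := by
      rw [hF]
      rw [Finset.sum_sub_distrib, ← Finset.mul_sum]
      linarith
    have hFne : ∀ i, F i ≠ 0 := fun i => sub_ne_zero.mpr (hex i)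
    have hineg : ∃ i, F i < 0 := by
      by_contra hc
      push_neg at hc
      have hpos : ∀ i ∈ Finset.univ, 0 < F i := fun i _ => lt_of_le_of_ne (hc i) (Ne.symm (hFne i))
      have := Finset.sum_pos hpos ⟨0, Finset.mem_univ 0⟩
      linarith
    have hjpos : ∃ j, 0 < F j := by
      by_contra hc
      push_neg at hc
      have hneg : ∀ i ∈ Finset.univ, F i < 0 :=
        fun i _ => lt_of_le_of_ne (hc i) (hFne i)
      have := Finset.sum_neg hneg ⟨0, Finset.mem_univ 0⟩
      linarith
    obtain ⟨i, hi⟩ := hineg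
    obtain ⟨j, hj⟩ := hjpos
    have hij : i ≠ j := by intro h; subst h; linarith
    have h1 : ‖star φ ⬝ᵥ u i‖^2 < g * nsq (u i) := by
      have h := hi; simp only [hF] at h; linarith
    have h2 : g * nsq (u j) < ‖star φ ⬝ᵥ u j‖^2 := by
      have h := hj; simp only [hF] at h; linarith
    have hindep : ∀ a b : ℂ, a • u i + b • u j = 0 → a = 0 ∧ b = 0 := by
      intro a b hab
      by_cases haz : a = 0
      · refine ⟨haz, ?_⟩
        rw [haz, zero_smul, zero_add] at hab
        rcases smul_eq_zero.mp hab with h | h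
        · exact h
        · exact absurd h (hu j)
      · exfalso
        have hui : u i = (-(b/a)) • u j := by
          have : a • u i = -(b • u j) := by
            rw [← sub_eq_zero]; rw [sub_neg_eq_add]; exact hab
          have := congrArg (fun x => a⁻¹ • x) this
          simp only [smul_smul, inv_mul_cancel₀ haz, one_smul] at this
          rw [this, smul_neg, smul_smul, ← neg_smul]
          congr 1
          field_simp
        set c : ℂ := -(b/a) with hc
        have hcne : c ≠ 0 := by
          intro hcz
          apply hu i
          rw [hui, hcz, zero_smul]
        have hd : ‖star φ ⬝ᵥ u i‖^2 = ‖c‖^2 * ‖star φ ⬝ᵥ u j‖^2 := by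
          rw [hui, dot_smul_right, norm_mul, mul_pow]
        have hn : nsq (u i) = ‖c‖^2 * nsq (u j) := by rw [hui, nsq_smul]
        have hcpos : 0 < ‖c‖^2 := pow_pos (norm_pos_iff.mpr hcne) 2
        rw [hd, hn] at h1
        have := (mul_lt_mul_iff_right₀ hcpos).mp (by linarith [h1] : ‖c‖^2 * ‖star φ ⬝ᵥ u j‖^2 < ‖c‖^2 * (g * nsq (u j)))
        linarith
    obtain ⟨w, w', hw, hw', houter, hoverlap⟩ := pair_equalize φ (u i) (u j) g hindep h1 h2
    set v : Fin (n+1) → (Fin d → ℂ) := Function.update (Function.update u i w) j w' with hv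
    have hvne : ∀ k, v k ≠ 0 := by
      intro k
      rw [hv]
      by_cases hk : k = j
      · subst hk; simpa using hw'
      · rw [Function.update_of_ne hk]
        by_cases hk' : k = i
        · subst hk'; simpa using hw
        · rw [Function.update_of_ne hk']; exact hu k
    have hvsum : ∑ k, outer (v k) = ∑ k, outer (u k) := by
      rw [hv, sum_comp_update_pair outer u hij w w',
        sum_eq_pair_add (fun k => outer (u k)) hij]
      rw [show outer w + outer w' = outer (u i) + outer (u j) from houter]
    have hvi : v i = w := by
      rw [hv, Function.update_of_ne hij, Function.update_self]
    refine ⟨v ∘ (Equiv.swap 0 i), fun k => hvne _, ?_, ?_⟩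
    · calc ∑ k, outer ((v ∘ (Equiv.swap 0 i)) k)
          = ∑ k, outer (v k) := Fintype.sum_equiv (Equiv.swap 0 i) _ _ (fun k => rfl)
        _ = ∑ k, outer (u k) := hvsum
    · simp only [Function.comp_apply, Equiv.swap_apply_left, hvi]
      exact hoverlap

/-- main equalization lemma -/
lemma main_equalize (φ : Fin d → ℂ) (g : ℝ) :
    ∀ n (u : Fin n → (Fin d → ℂ)), (∀ i, u i ≠ 0) →
    (∑ i, ‖star φ ⬝ᵥ u i‖^2 = g * ∑ i, nsq (u i)) →
    ∃ w : Fin n → (Fin d → ℂ), (∀ i, w i ≠ 0) ∧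
      (∑ i, outer (w i) = ∑ i, outer (u i)) ∧
      (∀ i, ‖star φ ⬝ᵥ w i‖^2 = g * nsq (w i)) := by
  intro n
  induction n with
  | zero => exact fun u _ _ => ⟨u, fun i => i.elim0, rfl, fun i => i.elim0⟩
  | succ n ih =>
    intro u hu hsum
    obtain ⟨v, hv0, hvsum, hv0cond⟩ := step φ g u hu hsum
    obtain ⟨hquad, hnsq⟩ := sums_eq_of_outer_sum_eq φ v u hvsum
    set tl : Fin n → (Fin d → ℂ) := fun i => v i.succ with htl
    have hsumtail : ∑ i, ‖star φ ⬝ᵥ tl i‖^2 = g * ∑ i, nsq (tl i) := by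
      have e1 : ∑ i, ‖star φ ⬝ᵥ v i‖^2 = ‖star φ ⬝ᵥ v 0‖^2 + ∑ i, ‖star φ ⬝ᵥ tl i‖^2 :=
        Fin.sum_univ_succ _
      have e2 : ∑ i, nsq (v i) = nsq (v 0) + ∑ i, nsq (tl i) := Fin.sum_univ_succ _
      have := hsum
      rw [← hquad, ← hnsq, e1, e2] at this
      rw [mul_add] at this
      linarith
    obtain ⟨wt, hwt0, hwtsum, hwtcond⟩ := ih tl (fun i => hv0 _) hsumtail
    refine ⟨Fin.cons (v 0) wt, ?_, ?_, ?_⟩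
    · intro i
      refine Fin.cases ?_ ?_ i
      · simpa using hv0 0
      · intro k; simpa using hwt0 k
    · rw [Fin.sum_univ_succ]
      simp only [Fin.cons_zero, Fin.cons_succ]
      rw [hwtsum]
      have : ∑ i, outer (v i) = outer (v 0) + ∑ i, outer (tl i) := Fin.sum_univ_succ _
      rw [← this, hvsum]
    · intro i
      refine Fin.cases ?_ ?_ i
      · simpa using hv0cond
      · intro k; simpa using hwtcond k

/-- expansion of conjugation of a diagonal matrix -/
lemma mul_diag_mul_conjT (V : Matrix (Fin d) (Fin d) ℂ) (c : Fin d → ℂ) :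
    V * Matrix.diagonal c * Vᴴ = ∑ k, c k • outer (fun i => V i k) := by
  ext i j
  have lhs : (V * Matrix.diagonal c * Vᴴ) i j = ∑ l, V i l * c l * star (V j l) := by
    rw [Matrix.mul_apply]
    refine Finset.sum_congr rfl fun l _ => ?_
    rw [Matrix.mul_diagonal, Matrix.conjTranspose_apply]
  rw [lhs, Matrix.sum_apply]
  refine Finset.sum_congr rfl fun k _ => ?_
  rw [Matrix.smul_apply, outer_apply]
  simp only [smul_eq_mul, Pi.star_apply]
  ring

end EqOverlapAux

end EqOverlapAux

open EqOverlapAux in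
/-- Lemma `le:GMequalPURE`: given a density matrix `ρ` and a unit vector `|φ⟩` with
`g = ⟨φ|ρ|φ⟩`, there is a pure-state decomposition `ρ = ∑ᵢ pᵢ |ψᵢ⟩⟨ψᵢ|` of length
`r = rank ρ` with `|⟨φ|ψᵢ⟩|² = g` for every `i`. -/
theorem exists_decomposition_equal_overlap {d : ℕ}
    (ρ : Matrix (Fin d) (Fin d) ℂ) (hρ : ρ.PosSemidef) (htr : ρ.trace = 1)
    (φ : Fin d → ℂ) (hφ : ∑ i, ‖φ i‖^2 = 1) :
    ∃ (p : Fin ρ.rank → ℝ) (ψ : Fin ρ.rank → (Fin d → ℂ)),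
      (∀ i, 0 < p i) ∧ (∑ i, p i = 1) ∧
      (∀ i, ∑ j, ‖ψ i j‖^2 = 1) ∧
      ρ = ∑ i, (p i : ℂ) • Matrix.vecMulVec (ψ i) (star (ψ i)) ∧
      ∀ i, ‖star φ ⬝ᵥ ψ i‖^2 = (star φ ⬝ᵥ ρ.mulVec φ).re := by
  classical
  have hH : ρ.IsHermitian := hρ.1
  set lam := hH.eigenvalues with hlam
  set V : Matrix (Fin d) (Fin d) ℂ := (hH.eigenvectorUnitary : Matrix (Fin d) (Fin d) ℂ)
    with hV
  have hspec : ρ = V * Matrix.diagonal (RCLike.ofReal ∘ lam) * Vᴴ := by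
    have := hH.spectral_theorem
    rw [← Matrix.star_eq_conjTranspose]
    exact this
  have hexp : ρ = ∑ k, ((lam k : ℝ) : ℂ) • outer (fun i => V i k) := by
    rw [hspec, mul_diag_mul_conjT]
    rfl
  -- columns of V are unit vectors
  have hVunit : star V * V = 1 := Matrix.mem_unitaryGroup_iff'.mp hH.eigenvectorUnitary.2
  have hcol_nsq : ∀ k, nsq (fun i => V i k) = 1 := by
    intro k
    have h1 : (star V * V) k k = 1 := by rw [hVunit]; simp
    have h2 : (star V * V) k k = ((nsq (fun i => V i k) : ℝ) : ℂ) := by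
      rw [Matrix.mul_apply]
      unfold nsq
      push_cast
      refine Finset.sum_congr rfl fun j _ => ?_
      rw [Matrix.star_eq_conjTranspose, Matrix.conjTranspose_apply]
      rw [show star (V j k) = (starRingEnd ℂ) (V j k) from rfl]
      rw [mul_comm, Complex.mul_conj, Complex.normSq_eq_norm_sq]
      norm_cast
    rw [h2] at h1
    exact_mod_cast h1
  have hcol_ne : ∀ k, (fun i => V i k) ≠ 0 := by
    intro k h0
    have := hcol_nsq k
    rw [h0] at this
    simp [nsq] at this
  -- the rank equals the number of nonzero eigenvalues
  have hrank : Fintype.card {k // lam k ≠ 0} = ρ.rank := (hH.rank_eq_card_non_zero_eigs).symm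
  let e : Fin ρ.rank ≃ {k // lam k ≠ 0} := (Fintype.equivFinOfCardEq hrank).symm
  have lam_pos : ∀ i : Fin ρ.rank, 0 < lam (e i) :=
    fun i => lt_of_le_of_ne (hρ.eigenvalues_nonneg (e i)) (Ne.symm (e i).2)
  -- the family with rank-many members
  set u : Fin ρ.rank → (Fin d → ℂ) :=
    fun i => ((Real.sqrt (lam (e i)) : ℝ) : ℂ) • (fun a => V a (e i)) with hu
  have hu_ne : ∀ i, u i ≠ 0 := by
    intro i
    apply smul_ne_zero
    · simp only [ne_eq, Complex.ofReal_eq_zero]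
      exact (Real.sqrt_pos.mpr (lam_pos i)).ne'
    · exact hcol_ne (e i)
  have houter_u : ∀ i, outer (u i) = ((lam (e i) : ℝ) : ℂ) • outer (fun a => V a (e i)) := by
    intro i
    rw [hu]
    simp only []
    rw [outer_smul]
    congr 1
    rw [Complex.star_def, Complex.conj_ofReal, ← Complex.ofReal_mul,
      Real.mul_self_sqrt (lam_pos i).le]
  have hρsum : ρ = ∑ i, outer (u i) := by
    have s1 : ∑ i, outer (u i)
        = ∑ s : {k // lam k ≠ 0}, ((lam s : ℝ) : ℂ) • outer (fun a => V a s) := by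
      rw [Finset.sum_congr rfl fun i _ => houter_u i]
      exact Equiv.sum_comp e (fun s => ((lam s : ℝ) : ℂ) • outer (fun a => V a s))
    have s2 : ∑ s : {k // lam k ≠ 0}, ((lam s : ℝ) : ℂ) • outer (fun a => V a s)
        = ∑ k ∈ Finset.univ.filter (fun k => lam k ≠ 0),
            ((lam k : ℝ) : ℂ) • outer (fun a => V a k) := by
      exact (Finset.sum_subtype (p := fun k => lam k ≠ 0)
        (Finset.univ.filter (fun k => lam k ≠ 0))
        (by intro x; simp) (fun k => ((lam k : ℝ) : ℂ) • outer (fun a => V a k))).symm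
    have s3 : ∑ k ∈ Finset.univ.filter (fun k => lam k ≠ 0),
            ((lam k : ℝ) : ℂ) • outer (fun a => V a k)
        = ∑ k, ((lam k : ℝ) : ℂ) • outer (fun a => V a k) := by
      apply Finset.sum_filter_of_ne
      intro k _ hk hk0
      apply hk
      rw [hk0]
      simp
    rw [s1, s2, s3, ← hexp]
  set g : ℝ := (star φ ⬝ᵥ ρ.mulVec φ).re with hgdef
  have hquadC := quad_of_sum_outer φ u hρsum
  have hg : ∑ i, ‖star φ ⬝ᵥ u i‖^2 = g := by rw [hgdef, hquadC, Complex.ofReal_re]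
  have htrC := trace_of_sum_outer u hρsum
  have hnsq1 : ∑ i, nsq (u i) = 1 := by
    rw [htrC] at htr
    exact_mod_cast htr
  have hsum : ∑ i, ‖star φ ⬝ᵥ u i‖^2 = g * ∑ i, nsq (u i) := by
    rw [hnsq1, mul_one, hg]
  obtain ⟨w, hwne, hwsum, hwcond⟩ := main_equalize φ g ρ.rank u hu_ne hsum
  have hρw : ρ = ∑ i, outer (w i) := by
    conv_lhs => rw [hρsum]
    exact hwsum.symm
  set p : Fin ρ.rank → ℝ := fun i => nsq (w i) with hp
  have hppos : ∀ i, 0 < p i := fun i => nsq_pos (hwne i)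
  set ψ : Fin ρ.rank → (Fin d → ℂ) :=
    fun i => (((Real.sqrt (p i))⁻¹ : ℝ) : ℂ) • w i with hψ
  have hcnorm : ∀ i, ‖((((Real.sqrt (p i))⁻¹ : ℝ)) : ℂ)‖^2 = (p i)⁻¹ := by
    intro i
    rw [Complex.norm_real, Real.norm_eq_abs,
      abs_of_nonneg (inv_nonneg.mpr (Real.sqrt_nonneg _)), inv_pow,
      Real.sq_sqrt (hppos i).le]
  refine ⟨p, ψ, hppos, ?_, ?_, ?_, ?_⟩
  · -- sum of p is 1
    have := (sums_eq_of_outer_sum_eq φ w u hwsum).2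
    rw [hp]
    simp only []
    rw [this]
    exact hnsq1
  · -- each ψ i is a unit vector
    intro i
    have : nsq (ψ i) = 1 := by
      rw [hψ]
      simp only []
      rw [nsq_smul, hcnorm i]
      exact inv_mul_cancel₀ (hppos i).ne'
    exact this
  · -- decomposition
    have hterm : ∀ i, (p i : ℂ) • Matrix.vecMulVec (ψ i) (star (ψ i)) = outer (w i) := by
      intro i
      have h1 : Matrix.vecMulVec (ψ i) (star (ψ i)) = outer (ψ i) := rfl
      rw [h1, hψ]
      simp only []
      rw [outer_smul, Complex.star_def, Complex.conj_ofReal, ← Complex.ofReal_mul,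
        ← Real.sqrt_inv, Real.mul_self_sqrt (inv_nonneg.mpr (hppos i).le)]
      rw [smul_smul, ← Complex.ofReal_mul, mul_inv_cancel₀ (hppos i).ne',
        Complex.ofReal_one, one_smul]
    rw [Finset.sum_congr rfl fun i _ => hterm i]
    exact hρw
  · -- overlaps
    intro i
    rw [hψ]
    simp only []
    rw [dot_smul_right, norm_mul, mul_pow, hcnorm i, hwcond i]
    have hpi : p i = nsq (w i) := rfl
    have hpne : p i ≠ 0 := (hppos i).ne'
    rw [← hpi]
    field_simp
end

section
/- Let D_α ≥ 1 be a natural number and let |ψ₁⟩,...,|ψ_{D_α}⟩ be orthonormal vectors. Define |G⟩ = (1/√D_α) ∑ᵢ |ψᵢ⟩ and δ = (1/D_α) ∑ᵢ |ψᵢ⟩⟨ψᵢ|. Then the nonzero eigenvalues of A = |G⟩⟨G| - δ are (D_α - 1)/D_α with multiplicity 1 and -1/D_α with multiplicity D_α - 1; consequently the trace distance satisfies ½ Tr|A| = 1 - 1/D_α. -/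
open Matrix
open scoped ComplexOrder Classical

/-! With `S = ∑ᵢ |ψᵢ⟩⟨ψᵢ|`, a projection of trace `D`, and `P = |G⟩⟨G|`, a rank-one projection
below it (`S P = P S = P`), we have `A = P - S / D = p P + q (S - P)` with `p = 1 - 1/D` and
`q = -1/D`, a combination of two mutually orthogonal projections. So every eigenvalue of `A` is
`0`, `p` or `q`, and their multiplicities `a`, `b` are pinned down by the two moment identities
`tr A = a p + b q` and `tr A² = a p² + b q²`, whence `a p = p` and `b = D - 1`. -/

namespace Multiset

variable {α : Type*} [DecidableEq α] [Zero α] {M : Multiset α} {p q : α}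

theorem filter_ne_zero_eq_replicate_add_replicate (hpq : p ≠ q)
    (hM : ∀ x ∈ M, x = 0 ∨ x = p ∨ x = q) :
    M.filter (· ≠ 0) = (replicate (M.count p) p + replicate (M.count q) q).filter (· ≠ 0) := by
  ext x
  simp only [count_filter, count_add, count_replicate]
  split_ifs <;> subst_vars <;> simp_all
  exact fun hx ↦ by grind

theorem sum_map_eq_count_smul_add_count_smul {β : Type*} [AddCommMonoid β] {f : α → β}
    (hf : f 0 = 0) (hpq : p ≠ q) (hM : ∀ x ∈ M, x = 0 ∨ x = p ∨ x = q) :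
    (M.map f).sum = M.count p • f p + M.count q • f q := by
  induction M using Multiset.induction_on with
  | empty => simp
  | cons x M ih =>
    rw [map_cons, sum_cons, ih fun y hy ↦ hM y (mem_cons_of_mem hy), count_cons, count_cons]
    rcases hM x (mem_cons_self x M) with rfl | rfl | rfl <;>
      split_ifs <;> subst_vars <;> simp_all [add_smul] <;> abel

theorem sum_map_filter_ne_zero {β : Type*} [AddCommMonoid β] (M : Multiset α) {f : α → β}
    (hf : f 0 = 0) : ((M.filter (· ≠ 0)).map f).sum = (M.map f).sum := by
  conv_rhs => rw [← filter_add_not (· ≠ 0) M]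
  have hzero : ((M.filter fun x ↦ ¬x ≠ 0).map f).sum = 0 := sum_eq_zero fun y hy ↦ by
    obtain ⟨x, hx, rfl⟩ := mem_map.mp hy
    rw [not_not.mp (mem_filter.mp hx).2, hf]
  rw [map_add, sum_add, hzero, add_zero]

theorem filter_ne_zero_replicate {K : Type*} [Ring K] [NoZeroDivisors K] [CharZero K] {n : ℕ}
    {p : K} (h : (n : K) * p = p) :
    (replicate n p).filter (· ≠ 0) = ({p} : Multiset K).filter (· ≠ 0) := by
  rcases eq_or_ne p 0 with rfl | hp
  · rw [filter_eq_nil.mpr fun _ ha ↦ not_not.mpr (eq_of_mem_replicate ha)]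
    simp [filter_singleton]
  · have : (n : K) = 1 := mul_right_cancel₀ hp (by rw [h, one_mul])
    rw [Nat.cast_eq_one.mp this, replicate_one]

end Multiset

theorem Finset.sum_abs_eq_of_filter_ne_zero_eq {ι : Type*} [Fintype ι] {f : ι → ℝ}
    {M : Multiset ℝ} (h : (Finset.univ.val.map f).filter (· ≠ 0) = M.filter (· ≠ 0)) :
    ∑ i, |f i| = (M.map abs).sum := by
  rw [← Multiset.sum_map_filter_ne_zero _ abs_zero, ← h,
    Multiset.sum_map_filter_ne_zero _ abs_zero, Multiset.map_map]
  rfl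

namespace Matrix

theorem vecMulVec_mul_self_of_dotProduct_eq_one {α n : Type*} [Semiring α] [Fintype n]
    {u v : n → α} (h : v ⬝ᵥ u = 1) : vecMulVec u v * vecMulVec u v = vecMulVec u v := by
  rw [vecMulVec_mul_vecMulVec, h, one_smul]

section Field

variable {K n : Type*} [Field K] [Fintype n] {A P R : Matrix n n K} {p q : K}

theorem eq_zero_or_eq_or_eq_of_mulVec_eq_smul (hA : A = p • P + q • R) (hP : P * P = P)
    (hR : R * R = R) (hPR : P * R = 0) (hRP : R * P = 0) {v : n → K} {c : K} (hv : v ≠ 0)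
    (hAv : A *ᵥ v = c • v) : c = 0 ∨ c = p ∨ c = q := by
  have hPA : P * A = p • P := by
    rw [hA, mul_add, mul_smul_comm, mul_smul_comm, hP, hPR, smul_zero, add_zero]
  have hRA : R * A = q • R := by
    rw [hA, mul_add, mul_smul_comm, mul_smul_comm, hR, hRP, smul_zero, zero_add]
  have hPv : (c - p) • (P *ᵥ v) = 0 := by
    rw [sub_smul, ← mulVec_smul, ← hAv, mulVec_mulVec, hPA, smul_mulVec, sub_self]
  have hRv : (c - q) • (R *ᵥ v) = 0 := by
    rw [sub_smul, ← mulVec_smul, ← hAv, mulVec_mulVec, hRA, smul_mulVec, sub_self]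
  by_contra! hc
  obtain ⟨hc0, hcp, hcq⟩ := hc
  have hPv0 := (smul_eq_zero.mp hPv).resolve_left (sub_ne_zero.mpr hcp)
  have hRv0 := (smul_eq_zero.mp hRv).resolve_left (sub_ne_zero.mpr hcq)
  have hcv : c • v = 0 := by
    rw [← hAv, hA, add_mulVec, smul_mulVec, smul_mulVec, hPv0, hRv0, smul_zero, smul_zero,
      add_zero]
  exact hv ((smul_eq_zero.mp hcv).resolve_left hc0)

theorem mul_self_eq_of_eq_smul_add_smul (hA : A = p • P + q • R) (hP : P * P = P)
    (hR : R * R = R) (hPR : P * R = 0) (hRP : R * P = 0) : A * A = p ^ 2 • P + q ^ 2 • R := by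
  simp only [hA, add_mul, mul_add, smul_mul_smul, hP, hR, hPR, hRP, smul_zero, add_zero,
    zero_add, sq]

end Field

section RCLike

variable {𝕜 n : Type*} [RCLike 𝕜] [Fintype n] [DecidableEq n] {A P R : Matrix n n 𝕜}

theorem IsHermitian.trace_mul_self (hA : A.IsHermitian) :
    (A * A).trace = ∑ i, (hA.eigenvalues i : 𝕜) ^ 2 := by
  conv_lhs => rw [hA.spectral_theorem, ← map_mul, Unitary.conjStarAlgAut_apply, trace_mul_cycle,
    Unitary.coe_star_mul_self, one_mul, diagonal_mul_diagonal, trace_diagonal]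
  simp [sq]

theorem IsHermitian.eq_zero_or_eq_or_eq_of_mem_eigenvalues (hA : A.IsHermitian) {p q : ℝ}
    (hAPR : A = (p : 𝕜) • P + (q : 𝕜) • R) (hP : P * P = P) (hR : R * R = R) (hPR : P * R = 0)
    (hRP : R * P = 0) {x : ℝ} (hx : x ∈ Finset.univ.val.map hA.eigenvalues) :
    x = 0 ∨ x = p ∨ x = q := by
  obtain ⟨i, -, rfl⟩ := Multiset.mem_map.mp hx
  have hv : ⇑(hA.eigenvectorBasis i) ≠ 0 :=
    (WithLp.ofLp_eq_zero 2).ne.2 (hA.eigenvectorBasis.orthonormal.ne_zero i)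
  have hAv := hA.mulVec_eigenvectorBasis i
  rw [RCLike.real_smul_eq_coe_smul (K := 𝕜)] at hAv
  exact_mod_cast eq_zero_or_eq_or_eq_of_mulVec_eq_smul hAPR hP hR hPR hRP hv hAv

theorem IsHermitian.count_eigenvalues_mul (hA : A.IsHermitian) {p q : ℝ}
    (hAPR : A = (p : 𝕜) • P + (q : 𝕜) • R) (hP : P * P = P) (hR : R * R = R) (hPR : P * R = 0)
    (hRP : R * P = 0) (hpq : p ≠ q) {k l : ℕ} (hPk : P.trace = k) (hRl : R.trace = l) :
    ((Finset.univ.val.map hA.eigenvalues).count p : ℝ) * p = k * p ∧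
      ((Finset.univ.val.map hA.eigenvalues).count q : ℝ) * q = l * q := by
  set M := Finset.univ.val.map hA.eigenvalues
  have hM := fun x ↦ hA.eq_zero_or_eq_or_eq_of_mem_eigenvalues hAPR hP hR hPR hRP (x := x)
  have hmoment (r : ℕ) (hr : r ≠ 0) :
      ∑ i, hA.eigenvalues i ^ r = M.count p * p ^ r + M.count q * q ^ r := by
    have h := M.sum_map_eq_count_smul_add_count_smul (f := (· ^ r)) (zero_pow hr) hpq hM
    rwa [Multiset.map_map, nsmul_eq_mul, nsmul_eq_mul] at h
  have h1 : (M.count p : ℝ) * p + M.count q * q = k * p + l * q := by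
    have htr : ((∑ i, hA.eigenvalues i : ℝ) : 𝕜) = (k * p + l * q : ℝ) := by
      push_cast
      rw [← hA.trace_eq_sum_eigenvalues, hAPR, trace_add, trace_smul, trace_smul, hPk, hRl,
        smul_eq_mul, smul_eq_mul]
      ring
    have h := hmoment 1 one_ne_zero
    simp only [pow_one] at h
    rw [← h]
    exact_mod_cast htr
  have h2 : (M.count p : ℝ) * p ^ 2 + M.count q * q ^ 2 = k * p ^ 2 + l * q ^ 2 := by
    have htr : ((∑ i, hA.eigenvalues i ^ 2 : ℝ) : 𝕜) = (k * p ^ 2 + l * q ^ 2 : ℝ) := by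
      push_cast
      rw [← hA.trace_mul_self, mul_self_eq_of_eq_smul_add_smul hAPR hP hR hPR hRP, trace_add,
        trace_smul, trace_smul, hPk, hRl, smul_eq_mul, smul_eq_mul]
      ring
    rw [← hmoment 2 two_ne_zero]
    exact_mod_cast htr
  constructor
  · have h : ((M.count p : ℝ) * p - k * p) * (p - q) = 0 := by linear_combination h2 - q * h1
    exact sub_eq_zero.mp ((mul_eq_zero.mp h).resolve_right (sub_ne_zero.mpr hpq))
  · have h : ((M.count q : ℝ) * q - l * q) * (q - p) = 0 := by linear_combination h2 - p * h1
    exact sub_eq_zero.mp ((mul_eq_zero.mp h).resolve_right (sub_ne_zero.mpr hpq.symm))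

theorem IsHermitian.filter_ne_zero_eigenvalues_of_eq_sub_inv_smul (hA : A.IsHermitian)
    {S : Matrix n n 𝕜} {D : ℕ} (hD : 1 ≤ D) (hAPS : A = P - (D : 𝕜)⁻¹ • S) (hP : P * P = P)
    (hS : S * S = S) (hSP : S * P = P) (hPS : P * S = P) (htrP : P.trace = 1)
    (htrS : S.trace = D) :
    (Finset.univ.val.map hA.eigenvalues).filter (· ≠ 0) =
      ((((D : ℝ) - 1) / D) ::ₘ Multiset.replicate (D - 1) (-(1 / (D : ℝ)))).filter (· ≠ 0) := by
  have hD0 : (D : ℝ) ≠ 0 := Nat.cast_ne_zero.mpr (by omega)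
  have hAPR : A = ((((D : ℝ) - 1) / D : ℝ) : 𝕜) • P + ((-(1 / (D : ℝ)) : ℝ) : 𝕜) • (S - P) := by
    rw [hAPS, smul_sub]
    match_scalars <;> field_simp
    ring
  have hR : (S - P) * (S - P) = S - P := by
    rw [sub_mul, mul_sub, mul_sub, hS, hSP, hPS, hP, sub_self, sub_zero]
  have hPR : P * (S - P) = 0 := by rw [mul_sub, hPS, hP, sub_self]
  have hRP : (S - P) * P = 0 := by rw [sub_mul, hSP, hP, sub_self]
  have htrR : (S - P).trace = ((D - 1 : ℕ) : 𝕜) := by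
    rw [trace_sub, htrS, htrP, Nat.cast_sub hD, Nat.cast_one]
  have hpq : ((D : ℝ) - 1) / D ≠ -(1 / (D : ℝ)) := by
    intro h
    field_simp at h
    exact hD0 (by linarith)
  obtain ⟨hp, hq⟩ := hA.count_eigenvalues_mul hAPR hP hR hPR hRP hpq (k := 1)
    (by rw [htrP, Nat.cast_one]) htrR
  have hq' : (Finset.univ.val.map hA.eigenvalues).count (-(1 / (D : ℝ))) = D - 1 :=
    Nat.cast_injective (mul_right_cancel₀ (by simpa using hD0) hq)
  rw [Multiset.filter_ne_zero_eq_replicate_add_replicate hpq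
    (fun x ↦ hA.eq_zero_or_eq_or_eq_of_mem_eigenvalues hAPR hP hR hPR hRP (x := x)), hq',
    ← Multiset.singleton_add, Multiset.filter_add, Multiset.filter_add,
    Multiset.filter_ne_zero_replicate (by rw [hp, Nat.cast_one, one_mul])]

end RCLike

section Orthonormal

variable {𝕜 ι n : Type*} [RCLike 𝕜] [Fintype ι]

theorem isHermitian_sum_vecMulVec_star (ψ : ι → n → 𝕜) :
    (∑ i, vecMulVec (ψ i) (star (ψ i))).IsHermitian := by
  simp [IsHermitian, conjTranspose_sum]

variable [Fintype n] [DecidableEq ι] {ψ : ι → n → 𝕜}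

theorem sum_vecMulVec_star_mulVec (horth : ∀ i j, star (ψ i) ⬝ᵥ ψ j = if i = j then 1 else 0)
    (j : ι) : (∑ i, vecMulVec (ψ i) (star (ψ i))) *ᵥ ψ j = ψ j := by
  simp [sum_mulVec, vecMulVec_mulVec, horth]

theorem sum_vecMulVec_star_mul_self
    (horth : ∀ i j, star (ψ i) ⬝ᵥ ψ j = if i = j then 1 else 0) :
    (∑ i, vecMulVec (ψ i) (star (ψ i))) * ∑ i, vecMulVec (ψ i) (star (ψ i)) =
      ∑ i, vecMulVec (ψ i) (star (ψ i)) := by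
  simp only [Finset.mul_sum, mul_vecMulVec, sum_vecMulVec_star_mulVec horth]

theorem trace_sum_vecMulVec_star (horth : ∀ i j, star (ψ i) ⬝ᵥ ψ j = if i = j then 1 else 0) :
    (∑ i, vecMulVec (ψ i) (star (ψ i))).trace = Fintype.card ι := by
  simp [trace_sum, dotProduct_comm (ψ _), horth]

theorem sum_vecMulVec_star_mulVec_normalized_sum
    (horth : ∀ i j, star (ψ i) ⬝ᵥ ψ j = if i = j then 1 else 0) :
    (∑ i, vecMulVec (ψ i) (star (ψ i))) *ᵥ
        (((Real.sqrt (Fintype.card ι) : ℝ) : 𝕜)⁻¹ • ∑ i, ψ i) =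
      ((Real.sqrt (Fintype.card ι) : ℝ) : 𝕜)⁻¹ • ∑ i, ψ i := by
  simp only [mulVec_smul, mulVec_sum, sum_vecMulVec_star_mulVec horth]

theorem star_normalized_sum_dotProduct_self [Nonempty ι]
    (horth : ∀ i j, star (ψ i) ⬝ᵥ ψ j = if i = j then 1 else 0) :
    star (((Real.sqrt (Fintype.card ι) : ℝ) : 𝕜)⁻¹ • ∑ i, ψ i) ⬝ᵥ
        (((Real.sqrt (Fintype.card ι) : ℝ) : 𝕜)⁻¹ • ∑ i, ψ i) = 1 := by
  simp only [star_smul, star_inv₀, RCLike.star_def, RCLike.conj_ofReal, star_sum,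
    dotProduct_smul, dotProduct_sum, smul_dotProduct, sum_dotProduct, horth, Finset.sum_ite_eq',
    Finset.mem_univ, if_true, smul_eq_mul, mul_one, Finset.sum_const, Finset.card_univ,
    nsmul_eq_mul]
  rw [mul_left_comm, ← mul_inv, ← RCLike.ofReal_mul, Real.mul_self_sqrt (Nat.cast_nonneg _),
    RCLike.ofReal_natCast, mul_inv_cancel₀ (Nat.cast_ne_zero.mpr Fintype.card_ne_zero)]

end Orthonormal

end Matrix

/-- For orthonormal `|ψ₁⟩,…,|ψ_D⟩`, `|G⟩ = (1/√D) ∑ᵢ |ψᵢ⟩` and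
`δ = (1/D) ∑ᵢ |ψᵢ⟩⟨ψᵢ|`, the nonzero eigenvalues of `A = |G⟩⟨G| - δ` are
`(D-1)/D` with multiplicity `1` and `-1/D` with multiplicity `D-1`; consequently
`½ Tr|A| = 1 - 1/D`. -/
theorem graph_state_trace_distance {m D : ℕ} (hD : 1 ≤ D)
    (ψ : Fin D → (Fin m → ℂ))
    (horth : ∀ i j, star (ψ i) ⬝ᵥ ψ j = if i = j then 1 else 0)
    (G : Fin m → ℂ) (hG : G = ((Real.sqrt D : ℝ) : ℂ)⁻¹ • ∑ i, ψ i)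
    (δ : Matrix (Fin m) (Fin m) ℂ)
    (hδ : δ = ((D : ℂ))⁻¹ • ∑ i, Matrix.vecMulVec (ψ i) (star (ψ i)))
    (hA : (Matrix.vecMulVec G (star G) - δ).IsHermitian) :
    (Multiset.filter (fun x : ℝ => x ≠ 0) (Finset.univ.val.map hA.eigenvalues) =
      Multiset.filter (fun x : ℝ => x ≠ 0)
        ((((D : ℝ) - 1) / D) ::ₘ Multiset.replicate (D - 1) (-(1 / (D : ℝ))))) ∧
    (1/2) * (∑ i, |hA.eigenvalues i|) = 1 - 1/(D : ℝ) := by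
  have : NeZero D := ⟨by omega⟩
  set S := ∑ i, vecMulVec (ψ i) (star (ψ i))
  have hSG : S *ᵥ G = G := by
    simpa [← hG] using sum_vecMulVec_star_mulVec_normalized_sum horth
  have hGG : star G ⬝ᵥ G = 1 := by
    simpa [← hG] using star_normalized_sum_dotProduct_self horth
  have hSP : S * vecMulVec G (star G) = vecMulVec G (star G) := by rw [mul_vecMulVec, hSG]
  have hPS : vecMulVec G (star G) * S = vecMulVec G (star G) := by
    have h := congrArg conjTranspose hSP
    rwa [conjTranspose_mul, (isHermitian_sum_vecMulVec_star ψ).eq, conjTranspose_vecMulVec,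
      star_star] at h
  have hfilter := hA.filter_ne_zero_eigenvalues_of_eq_sub_inv_smul hD (by rw [hδ])
    (vecMulVec_mul_self_of_dotProduct_eq_one hGG) (sum_vecMulVec_star_mul_self horth) hSP hPS
    (by rw [trace_vecMulVec, dotProduct_comm, hGG]) (by simpa using trace_sum_vecMulVec_star horth)
  refine ⟨hfilter, ?_⟩
  rw [Finset.sum_abs_eq_of_filter_ne_zero_eq hfilter]
  have hD1 : (1 : ℝ) ≤ D := by exact_mod_cast hD
  simp only [Multiset.map_cons, Multiset.sum_cons, Multiset.map_replicate, Multiset.sum_replicate,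
    abs_neg, abs_of_nonneg (div_nonneg (sub_nonneg.mpr hD1) (by linarith : (0 : ℝ) ≤ D)),
    abs_of_nonneg (by positivity : (0 : ℝ) ≤ 1 / D), nsmul_eq_mul, Nat.cast_sub hD, Nat.cast_one]
  field_simp
  ring
end

section
/- Let m, n be positive natural numbers with m ≤ n, q ∈ (0,1), and define f(h,s) = [(q - s(1-q))/(1-hs)]·(1+h)·log₂(m(1+h)) + [((1-q) - hq)/(1-hs)]·(1+s)·log₂(n(1+s)) on the domain h ∈ [0,(1-q)/q], s ∈ [0, q/(1-q)], excluding the point ((1-q)/q, q/(1-q)). If m/n ≥ 1/e then the minimum of f equals q·log₂ m + (1-q)·log₂ n; if m/n < 1/e and q ≥ em/n the minimum equals log₂(m/q); if m/n < 1/e and q < em/n the minimum equals log₂ n - q·n·log₂(e)/(m·e). -/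
/-!
Write `a` and `b` for the two coefficients in `f(h,s)`. On the domain they are nonnegative
weights with `a + b = 1` that split `q = a/(1+h) + b·s/(1+s)`, and
`f(h,s)·ln 2 = a·ln(m(1+h)) + b·ln(n(1+s))`. The tangent bounds `ln(t(1+h)) ≥ 1 - 1/(t(1+h))`
and `ln(1+s) ≥ s/(1+s)`, together with `a/(1+h) ≤ q`, give
`f·ln 2 ≥ a·(ln(m/t) + 1) + b·ln n - q/t` for every `t > 0`. Taking `t = 1` (when `a ≥ q`;
otherwise `f·ln 2 ≥ a·ln m + b·ln n` already suffices), `t = q` and `t = e·m/n` yields the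
three lower bounds, attained on the edge `s = 0` at `1 + h = 1`, `1/q` and `n/(e·m)` respectively.
-/

open Real

noncomputable def boundaryValue (m n q h s : ℝ) : ℝ :=
  ((q - s*(1-q))/(1 - h*s)) * (1+h) * logb 2 (m*(1+h)) +
    (((1-q) - h*q)/(1 - h*s)) * (1+s) * logb 2 (n*(1+s))

def boundaryValues (m n q : ℝ) : Set ℝ :=
  {y : ℝ | ∃ h s : ℝ, 0 ≤ h ∧ h ≤ (1-q)/q ∧ 0 ≤ s ∧ s ≤ q/(1-q) ∧
    ¬(h = (1-q)/q ∧ s = q/(1-q)) ∧ y = boundaryValue m n q h s}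

structure Admissible (q a b h s : ℝ) : Prop where
  a_nonneg : 0 ≤ a
  b_nonneg : 0 ≤ b
  add_eq_one : a + b = 1
  h_nonneg : 0 ≤ h
  s_nonneg : 0 ≤ s
  split : a / (1 + h) + b * (s / (1 + s)) = q

noncomputable def weightedLog (m n a b h s : ℝ) : ℝ :=
  a * log (m * (1 + h)) + b * log (n * (1 + s))

section Domain

variable {q h s : ℝ}

lemma one_sub_mul_pos_of_mem_domain (hq0 : 0 < q) (hq1 : q < 1) (hh0 : 0 ≤ h)
    (hh1 : h ≤ (1-q)/q) (hs0 : 0 ≤ s) (hs1 : s ≤ q/(1-q))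
    (hcorner : ¬(h = (1-q)/q ∧ s = q/(1-q))) : 0 < 1 - h * s := by
  have hq1' : 0 < 1 - q := by linarith
  have hhq : h * q ≤ 1 - q := (le_div_iff₀ hq0).1 hh1
  have hsq : s * (1 - q) ≤ q := (le_div_iff₀ hq1').1 hs1
  have key : (h * q) * (s * (1 - q)) < (1 - q) * q := by
    rcases hh1.lt_or_eq with hh1 | rfl
    · have : h * q < 1 - q := (lt_div_iff₀ hq0).1 hh1
      nlinarith [mul_le_mul_of_nonneg_left hsq (by positivity : 0 ≤ h * q)]
    · have : s * (1 - q) < q :=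
        (lt_div_iff₀ hq1').1 (hs1.lt_of_ne fun hs => hcorner ⟨rfl, hs⟩)
      nlinarith [mul_le_mul_of_nonneg_right hhq (by positivity : 0 ≤ s * (1 - q))]
  nlinarith [mul_pos hq0 hq1']

lemma admissible_of_mem_domain (hq0 : 0 < q) (hq1 : q < 1) (hh0 : 0 ≤ h)
    (hh1 : h ≤ (1-q)/q) (hs0 : 0 ≤ s) (hs1 : s ≤ q/(1-q))
    (hcorner : ¬(h = (1-q)/q ∧ s = q/(1-q))) :
    Admissible q ((q - s*(1-q))/(1 - h*s) * (1+h)) (((1-q) - h*q)/(1 - h*s) * (1+s)) h s := by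
  have hD := one_sub_mul_pos_of_mem_domain hq0 hq1 hh0 hh1 hs0 hs1 hcorner
  have hsq : 0 ≤ q - s * (1 - q) := by linarith [(le_div_iff₀ (by linarith : 0 < 1 - q)).1 hs1]
  have hhq : 0 ≤ (1 - q) - h * q := by linarith [(le_div_iff₀ hq0).1 hh1]
  refine ⟨by positivity, by positivity, ?_, hh0, hs0, ?_⟩
  · rw [div_mul_eq_mul_div, div_mul_eq_mul_div, ← add_div, div_eq_one_iff_eq hD.ne']
    ring
  · rw [mul_div_cancel_right₀ _ (by positivity), mul_assoc, mul_div_cancel₀ _ (by positivity),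
      ← mul_div_right_comm, ← add_div, div_eq_iff hD.ne']
    ring

end Domain

lemma boundaryValue_mul_log_two (m n q h s : ℝ) :
    boundaryValue m n q h s * log 2 =
      weightedLog m n ((q - s*(1-q))/(1 - h*s) * (1+h)) (((1-q) - h*q)/(1 - h*s) * (1+s)) h s := by
  simp only [boundaryValue, weightedLog, logb]
  field_simp

lemma boundaryValue_zero_right (m n q h : ℝ) :
    boundaryValue m n q h 0 = q * (1+h) * logb 2 (m * (1+h)) + (1 - q * (1+h)) * logb 2 n := by
  simp only [boundaryValue]
  ring_nf

section LowerBounds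

variable {m n q a b h s : ℝ}

lemma le_weightedLog (hm : 0 < m) (hn : 0 < n) (hadm : Admissible q a b h s) {t : ℝ}
    (ht : 0 < t) : a * (log (m / t) + 1) + b * log n - q / t ≤ weightedLog m n a b h s := by
  obtain ⟨ha, hb, -, hh, hs, hsplit⟩ := hadm
  have hh' : 0 < 1 + h := by linarith
  have hs' : 0 < 1 + s := by linarith
  have bound_h : log (m / t) + 1 - 1 / (t * (1 + h)) ≤ log (m * (1 + h)) := by
    have := one_sub_inv_le_log_of_pos (mul_pos ht hh')
    rw [show m * (1 + h) = m / t * (t * (1 + h)) by field_simp,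
      log_mul (by positivity) (by positivity), one_div]
    linarith
  have bound_s : log n + s / (1 + s) ≤ log (n * (1 + s)) := by
    have := one_sub_inv_le_log_of_pos hs'
    rw [log_mul hn.ne' hs'.ne', show s / (1 + s) = 1 - (1 + s)⁻¹ by field_simp; ring]
    linarith
  have hw : a / (1 + h) ≤ q := by
    rw [← hsplit]
    exact le_add_of_nonneg_right (by positivity)
  calc a * (log (m / t) + 1) + b * log n - q / t
      ≤ a * (log (m / t) + 1) + b * log n + (q - a / (1 + h)) - a / (1 + h) / t := by
        have := div_le_div_of_nonneg_right hw ht.le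
        linarith
    _ = a * (log (m / t) + 1 - 1 / (t * (1 + h))) + b * (log n + s / (1 + s)) := by
        rw [← hsplit]
        field_simp
        ring
    _ ≤ weightedLog m n a b h s :=
        add_le_add (mul_le_mul_of_nonneg_left bound_h ha) (mul_le_mul_of_nonneg_left bound_s hb)

lemma mix_log_le_weightedLog (hm : 0 < m) (hn : 0 < n) (hadm : Admissible q a b h s) :
    a * log m + b * log n ≤ weightedLog m n a b h s := by
  obtain ⟨ha, hb, -, hh, hs, -⟩ := hadm
  unfold weightedLog
  gcongr
  · exact le_mul_of_one_le_right hm.le (by linarith)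
  · exact le_mul_of_one_le_right hn.le (by linarith)

lemma mix_log_le_weightedLog_of_le_exp_mul (hm : 0 < m) (hn : 0 < n) (hmn : m ≤ n)
    (hnm : n ≤ exp 1 * m) (hadm : Admissible q a b h s) :
    q * log m + (1 - q) * log n ≤ weightedLog m n a b h s := by
  have hlog : log m ≤ log n := log_le_log hm hmn
  have hlog' : log n ≤ log m + 1 := by
    simpa [log_mul (exp_pos 1).ne' hm.ne', add_comm] using log_le_log hn hnm
  obtain rfl : b = 1 - a := by linarith [hadm.add_eq_one]
  rcases le_total a q with haq | hqa
  · calc q * log m + (1 - q) * log n ≤ a * log m + (1 - a) * log n := by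
          linarith [mul_nonneg (sub_nonneg.2 haq) (sub_nonneg.2 hlog)]
      _ ≤ weightedLog m n a (1 - a) h s := mix_log_le_weightedLog hm hn hadm
  · calc q * log m + (1 - q) * log n ≤ a * (log (m / 1) + 1) + (1 - a) * log n - q / 1 := by
          rw [div_one, div_one]
          linarith [mul_nonneg (sub_nonneg.2 hqa) (sub_nonneg.2 hlog')]
      _ ≤ weightedLog m n a (1 - a) h s := le_weightedLog hm hn hadm one_pos

lemma log_div_le_weightedLog (hm : 0 < m) (hn : 0 < n) (hq : 0 < q) (hqn : exp 1 * m ≤ q * n)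
    (hadm : Admissible q a b h s) : log (m / q) ≤ weightedLog m n a b h s := by
  have key : log (m / q) + 1 ≤ log n := by
    have := log_le_log (by positivity) ((div_le_iff₀' hq).2 hqn)
    rwa [mul_div_assoc, log_mul (exp_pos 1).ne' (by positivity), log_exp, add_comm] at this
  obtain rfl : a = 1 - b := by linarith [hadm.add_eq_one]
  calc log (m / q) ≤ (1 - b) * (log (m / q) + 1) + b * log n - q / q := by
        rw [div_self hq.ne']
        linarith [mul_nonneg hadm.b_nonneg (sub_nonneg.2 key)]
    _ ≤ weightedLog m n (1 - b) b h s := le_weightedLog hm hn hadm hq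

lemma log_sub_le_weightedLog (hm : 0 < m) (hn : 0 < n) (hadm : Admissible q a b h s) :
    log n - q * n / (m * exp 1) ≤ weightedLog m n a b h s := by
  have ht : 0 < exp 1 * m / n := by positivity
  have hlog : log (m / (exp 1 * m / n)) + 1 = log n := by
    rw [show m / (exp 1 * m / n) = n / exp 1 by field_simp, log_div hn.ne' (exp_pos 1).ne',
      log_exp]
    ring
  have hdiv : q / (exp 1 * m / n) = q * n / (m * exp 1) := by
    field_simp
  calc log n - q * n / (m * exp 1)
      = a * (log (m / (exp 1 * m / n)) + 1) + b * log n - q / (exp 1 * m / n) := by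
        rw [hlog, hdiv, ← add_mul, hadm.add_eq_one, one_mul]
    _ ≤ weightedLog m n a b h s := le_weightedLog hm hn hadm ht

end LowerBounds

lemma isLeast_boundaryValues {m n q c H : ℝ} (hq0 : 0 < q) (hq1 : q < 1) (hH1 : 1 ≤ H)
    (hHq : q * H ≤ 1) (hc : q * H * logb 2 (m * H) + (1 - q * H) * logb 2 n = c)
    (hlow : ∀ a b h s, Admissible q a b h s → c * log 2 ≤ weightedLog m n a b h s) :
    IsLeast (boundaryValues m n q) c := by
  refine ⟨⟨H - 1, 0, by linarith, ?_, le_rfl, by positivity,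
    fun hcorner => (div_pos hq0 (by linarith)).ne' hcorner.2.symm, ?_⟩, ?_⟩
  · rw [le_div_iff₀ hq0]
    linarith
  · rw [boundaryValue_zero_right, add_sub_cancel, hc]
  · rintro _ ⟨h, s, hh0, hh1, hs0, hs1, hcorner, rfl⟩
    refine le_of_mul_le_mul_right ?_ (log_pos one_lt_two)
    rw [boundaryValue_mul_log_two]
    exact hlow _ _ _ _ (admissible_of_mem_domain hq0 hq1 hh0 hh1 hs0 hs1 hcorner)

section Cases

variable {m n q : ℝ}

lemma isLeast_boundaryValues_of_le_exp_mul (hm : 0 < m) (hn : 0 < n) (hmn : m ≤ n)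
    (hnm : n ≤ exp 1 * m) (hq0 : 0 < q) (hq1 : q < 1) :
    IsLeast (boundaryValues m n q) (q * logb 2 m + (1 - q) * logb 2 n) := by
  refine isLeast_boundaryValues hq0 hq1 le_rfl (by linarith) (by simp) fun a b h s hadm => ?_
  convert mix_log_le_weightedLog_of_le_exp_mul hm hn hmn hnm hadm using 1
  simp only [logb]
  field_simp

lemma isLeast_boundaryValues_of_exp_mul_le (hm : 0 < m) (hn : 0 < n)
    (hqn : exp 1 * m ≤ q * n) (hq0 : 0 < q) (hq1 : q < 1) :
    IsLeast (boundaryValues m n q) (logb 2 (m / q)) := by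
  refine isLeast_boundaryValues hq0 hq1 ((one_le_div hq0).2 hq1.le)
    (mul_one_div_cancel hq0.ne').le ?_ fun a b h s hadm => ?_
  · rw [mul_one_div_cancel hq0.ne', mul_one_div]
    ring
  · convert log_div_le_weightedLog hm hn hq0 hqn hadm using 1
    simp only [logb]
    field_simp

lemma isLeast_boundaryValues_of_mul_le_exp_mul (hm : 0 < m) (hn : 0 < n)
    (hmn : exp 1 * m ≤ n) (hqn : q * n ≤ exp 1 * m) (hq0 : 0 < q) (hq1 : q < 1) :
    IsLeast (boundaryValues m n q) (logb 2 n - q * (n * logb 2 (exp 1)) / (m * exp 1)) := by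
  refine isLeast_boundaryValues (H := n / (exp 1 * m)) hq0 hq1
    ((one_le_div (by positivity)).2 hmn) ?_ ?_ fun a b h s hadm => ?_
  · rwa [mul_div_assoc', div_le_one (by positivity)]
  · rw [show m * (n / (exp 1 * m)) = n / exp 1 by field_simp, logb_div hn.ne' (exp_pos 1).ne']
    field_simp
    ring
  · convert log_sub_le_weightedLog hm hn hadm using 1
    simp only [logb, log_exp]
    field_simp

end Cases

/-- Lemma `le:fhs`: minimum of the boundary function `f(h,s)` arising in the computation
of the convex-roof logarithmic GM of rank-2 maximally correlated qudit states, depending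
on the parameters `m ≤ n` and `q ∈ (0,1)`. -/
theorem min_f_h_s (m n : ℕ) (hm : 0 < m) (hmn : m ≤ n)
    (q : ℝ) (hq0 : 0 < q) (hq1 : q < 1)
    (f : ℝ → ℝ → ℝ)
    (hf : ∀ h s : ℝ, f h s =
      ((q - s*(1-q))/(1 - h*s)) * (1+h) * Real.logb 2 ((m : ℝ)*(1+h)) +
      (((1-q) - h*q)/(1 - h*s)) * (1+s) * Real.logb 2 ((n : ℝ)*(1+s)))
    (V : Set ℝ)
    (hV : V = {y : ℝ | ∃ h s : ℝ, 0 ≤ h ∧ h ≤ (1-q)/q ∧ 0 ≤ s ∧ s ≤ q/(1-q) ∧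
      ¬(h = (1-q)/q ∧ s = q/(1-q)) ∧ y = f h s}) :
    ((1 / Real.exp 1 ≤ (m : ℝ)/(n : ℝ)) →
      IsLeast V (q * Real.logb 2 (m : ℝ) + (1-q) * Real.logb 2 (n : ℝ))) ∧
    ((m : ℝ)/(n : ℝ) < 1 / Real.exp 1 → Real.exp 1 * (m : ℝ) / (n : ℝ) ≤ q →
      IsLeast V (Real.logb 2 ((m : ℝ)/q))) ∧
    ((m : ℝ)/(n : ℝ) < 1 / Real.exp 1 → q < Real.exp 1 * (m : ℝ) / (n : ℝ) →
      IsLeast V (Real.logb 2 (n : ℝ) -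
        q * ((n : ℝ) * Real.logb 2 (Real.exp 1)) / ((m : ℝ) * Real.exp 1))) := by
  have hmR : (0 : ℝ) < m := by exact_mod_cast hm
  have hnR : (0 : ℝ) < n := by exact_mod_cast hm.trans_le hmn
  obtain rfl : f = boundaryValue m n q := funext fun h => funext (hf h)
  subst hV
  refine ⟨fun hcase => ?_, fun _ hcase => ?_, fun hcase1 hcase2 => ?_⟩
  · rw [div_le_div_iff₀ (exp_pos 1) hnR] at hcase
    exact isLeast_boundaryValues_of_le_exp_mul hmR hnR (by exact_mod_cast hmn) (by linarith)
      hq0 hq1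
  · exact isLeast_boundaryValues_of_exp_mul_le hmR hnR ((div_le_iff₀ hnR).1 hcase) hq0 hq1
  · rw [div_lt_div_iff₀ hnR (exp_pos 1)] at hcase1
    exact isLeast_boundaryValues_of_mul_le_exp_mul hmR hnR (by linarith)
      ((lt_div_iff₀ hnR).1 hcase2).le hq0 hq1
end

section
/- Let p ∈ [0,1], d ≥ 2, α ∈ [0, 1/d], and consider the real symmetric matrix A of size d² whose upper-left 2×2 block is [[p/d² + 1 - p - α, -√(α(1-α))],[-√(α(1-α)), p/d² - 1 + α]] and whose remaining diagonal entries all equal p/d². Then the eigenvalues of A are p/d² - p/2 ± ½√((2-p)² - 4α(1-p)), each with multiplicity 1, and p/d² with multiplicity d² - 2; moreover the radicand (2-p)² - 4α(1-p) is nonnegative. -/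
/-!
Reordering the basis as `Fin 2 ⊕ Fin (d² - 2)` makes `A` block diagonal: a `2 × 2` block and the
scalar block `p/d² • 1`. The characteristic polynomial therefore factors as the quadratic of the
`2 × 2` block times `(X - p/d²)^(d² - 2)`, and the quadratic's roots are read off from its trace
`2p/d² - p` and determinant `(p/d² - p/2)² - ((2-p)² - 4α(1-p))/4`.
Since `A` is Hermitian, its eigenvalues are the roots of its characteristic polynomial.
The radicand is at least `p²` because `α ≤ 1/d ≤ 1`.
-/

open Matrix Polynomial

def finTwoSumEquiv {n : ℕ} (hn : 2 ≤ n) : Fin 2 ⊕ Fin (n - 2) ≃ Fin n :=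
  finSumFinEquiv.trans (finCongr (Nat.add_sub_cancel' hn))

namespace Matrix

variable {R : Type*} [CommRing R]

def twoBlockScalar (B : Matrix (Fin 2) (Fin 2) R) (μ : R) (n : ℕ) : Matrix (Fin n) (Fin n) R :=
  of fun i j => if h : (i : ℕ) < 2 ∧ (j : ℕ) < 2 then B ⟨i, h.1⟩ ⟨j, h.2⟩
    else if i = j then μ else 0

lemma of_eq_twoBlockScalar (n : ℕ) (a b c μ : R) :
    of (fun i j : Fin n =>
      if i.val = 0 ∧ j.val = 0 then a
      else if (i.val = 0 ∧ j.val = 1) ∨ (i.val = 1 ∧ j.val = 0) then b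
      else if i.val = 1 ∧ j.val = 1 then c
      else if i = j then μ else 0) = twoBlockScalar !![a, b; b, c] μ n := by
  ext ⟨i, hi⟩ ⟨j, hj⟩
  simp only [twoBlockScalar, of_apply, Fin.mk.injEq]
  split_ifs <;> first
    | rfl
    | omega
    | (obtain ⟨rfl, rfl⟩ | ⟨rfl, rfl⟩ := ‹_ ∨ _› <;> rfl)
    | (obtain ⟨rfl, rfl⟩ := ‹(_ = _) ∧ (_ = _)›; rfl)

lemma reindex_twoBlockScalar {n : ℕ} (hn : 2 ≤ n) (B : Matrix (Fin 2) (Fin 2) R) (μ : R) :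
    reindex (finTwoSumEquiv hn).symm (finTwoSumEquiv hn).symm (twoBlockScalar B μ n) =
      fromBlocks B 0 0 (diagonal fun _ => μ) := by
  ext (i | i) (j | j) <;>
    simp only [reindex_apply, submatrix_apply, Equiv.symm_symm, twoBlockScalar, of_apply,
      finTwoSumEquiv, Equiv.trans_apply, finSumFinEquiv_apply_left, finSumFinEquiv_apply_right,
      finCongr_apply, Fin.val_cast, Fin.val_castAdd, Fin.val_natAdd, fromBlocks_apply₁₁,
      fromBlocks_apply₁₂, fromBlocks_apply₂₁, fromBlocks_apply₂₂, Fin.ext_iff]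
  · exact dif_pos ⟨i.isLt, j.isLt⟩
  · rw [dif_neg (by omega), if_neg (by omega), Matrix.zero_apply]
  · rw [dif_neg (by omega), if_neg (by omega), Matrix.zero_apply]
  · rw [dif_neg (by omega), diagonal_apply]
    simp only [Nat.add_left_cancel_iff, Fin.val_inj]

lemma charpoly_twoBlockScalar {n : ℕ} (hn : 2 ≤ n) (B : Matrix (Fin 2) (Fin 2) R) (μ : R) :
    (twoBlockScalar B μ n).charpoly = B.charpoly * (X - C μ) ^ (n - 2) := by
  rw [← charpoly_reindex (finTwoSumEquiv hn).symm, reindex_twoBlockScalar hn,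
    charpoly_fromBlocks_zero₂₁, charpoly_diagonal, Finset.prod_const, Finset.card_univ,
    Fintype.card_fin]

lemma charpoly_fin_two_eq_of_trace_det [Nontrivial R] {M : Matrix (Fin 2) (Fin 2) R} {r s : R}
    (htr : M.trace = r + s) (hdet : M.det = r * s) :
    M.charpoly = (X - C r) * (X - C s) := by
  rw [charpoly_fin_two, htr, hdet, C_add, C_mul]
  ring

end Matrix

lemma Polynomial.roots_X_sub_C_mul_X_sub_C_mul_pow {K : Type*} [CommRing K] [IsDomain K]
    (r s μ : K) (k : ℕ) :
    ((X - C r) * (X - C s) * (X - C μ) ^ k).roots = r ::ₘ s ::ₘ Multiset.replicate k μ := by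
  have hrs : (X - C r) * (X - C s) ≠ 0 := mul_ne_zero (X_sub_C_ne_zero r) (X_sub_C_ne_zero s)
  rw [roots_mul (mul_ne_zero hrs (pow_ne_zero k (X_sub_C_ne_zero μ))), roots_mul hrs,
    roots_X_sub_C, roots_X_sub_C, roots_pow, roots_X_sub_C, Multiset.nsmul_singleton]
  rfl

theorem isotropic_minus_pure_eigenvalues_general (d : ℕ) (hd : 2 ≤ d) (p α : ℝ)
    (hp1 : p ≤ 1) (hα0 : 0 ≤ α) (hα1 : α ≤ 1/(d : ℝ))
    (A : Matrix (Fin (d^2)) (Fin (d^2)) ℝ)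
    (hAdef : A = Matrix.of (fun i j : Fin (d^2) =>
      if i.val = 0 ∧ j.val = 0 then p/(d : ℝ)^2 + 1 - p - α
      else if (i.val = 0 ∧ j.val = 1) ∨ (i.val = 1 ∧ j.val = 0) then
        -Real.sqrt (α*(1-α))
      else if i.val = 1 ∧ j.val = 1 then p/(d : ℝ)^2 - 1 + α
      else if i = j then p/(d : ℝ)^2 else 0))
    (hA : A.IsHermitian) :
    0 ≤ (2-p)^2 - 4*α*(1-p) ∧
    Finset.univ.val.map hA.eigenvalues =
      (p/(d : ℝ)^2 - p/2 + (1/2)*Real.sqrt ((2-p)^2 - 4*α*(1-p))) ::ₘ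
      (p/(d : ℝ)^2 - p/2 - (1/2)*Real.sqrt ((2-p)^2 - 4*α*(1-p))) ::ₘ
      Multiset.replicate (d^2 - 2) (p/(d : ℝ)^2) := by
  have hα_le_one : α ≤ 1 :=
    hα1.trans (div_le_one_of_le₀ (by exact_mod_cast (by omega : 1 ≤ d)) (by positivity))
  have hdisc : 0 ≤ (2-p)^2 - 4*α*(1-p) := by
    nlinarith [mul_le_mul_of_nonneg_right hα_le_one (sub_nonneg.mpr hp1), sq_nonneg p]
  refine ⟨hdisc, ?_⟩
  set μ := p/(d : ℝ)^2
  set s := Real.sqrt ((2-p)^2 - 4*α*(1-p))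
  have hs : s ^ 2 = (2-p)^2 - 4*α*(1-p) := Real.sq_sqrt hdisc
  have hb : Real.sqrt (α*(1-α)) ^ 2 = α*(1-α) := Real.sq_sqrt (by nlinarith)
  have hchar : A.charpoly = (X - C (μ - p/2 + (1/2)*s)) * (X - C (μ - p/2 - (1/2)*s)) *
      (X - C μ) ^ (d^2 - 2) := by
    rw [hAdef, of_eq_twoBlockScalar, charpoly_twoBlockScalar (by nlinarith),
      charpoly_fin_two_eq_of_trace_det]
    · rw [trace_fin_two_of]; ring
    · rw [det_fin_two_of]; linear_combination -hb + hs / 4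
  have hroots : A.charpoly.roots = Finset.univ.val.map hA.eigenvalues := by
    simpa using hA.roots_charpoly_eq_eigenvalues
  rw [← hroots, hchar, roots_X_sub_C_mul_X_sub_C_mul_pow]

/-- Eigenvalues of the matrix `A = ρ_iso - |φ⟩⟨φ|` written in the basis determined by the
maximally entangled state: the `d² × d²` real symmetric matrix with upper-left block
`[[p/d² + 1 - p - α, -√(α(1-α))], [-√(α(1-α)), p/d² - 1 + α]]` and remaining diagonal
entries `p/d²` has eigenvalues `p/d² - p/2 ± ½√((2-p)² - 4α(1-p))` (each once) and
`p/d²` with multiplicity `d² - 2`; moreover the radicand is nonnegative. -/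
theorem isotropic_minus_pure_eigenvalues (d : ℕ) (hd : 2 ≤ d) (p α : ℝ)
    (hp0 : 0 ≤ p) (hp1 : p ≤ 1) (hα0 : 0 ≤ α) (hα1 : α ≤ 1/(d : ℝ))
    (A : Matrix (Fin (d^2)) (Fin (d^2)) ℝ)
    (hAdef : A = Matrix.of (fun i j : Fin (d^2) =>
      if i.val = 0 ∧ j.val = 0 then p/(d : ℝ)^2 + 1 - p - α
      else if (i.val = 0 ∧ j.val = 1) ∨ (i.val = 1 ∧ j.val = 0) then
        -Real.sqrt (α*(1-α))
      else if i.val = 1 ∧ j.val = 1 then p/(d : ℝ)^2 - 1 + α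
      else if i = j then p/(d : ℝ)^2 else 0))
    (hA : A.IsHermitian) :
    0 ≤ (2-p)^2 - 4*α*(1-p) ∧
    Finset.univ.val.map hA.eigenvalues =
      (p/(d : ℝ)^2 - p/2 + (1/2)*Real.sqrt ((2-p)^2 - 4*α*(1-p))) ::ₘ
      (p/(d : ℝ)^2 - p/2 - (1/2)*Real.sqrt ((2-p)^2 - 4*α*(1-p))) ::ₘ
      Multiset.replicate (d^2 - 2) (p/(d : ℝ)^2) :=
  isotropic_minus_pure_eigenvalues_general d hd p α hp1 hα0 hα1 A hAdef hA
end
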